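/- arXiv:2210.16832 — 2 statements merged into one kernel-verified Lean document; each statement's English description precedes it below -/
import Mathlib

section
/- For every s ∈ μ_r, every v ∈ A_1, and every w ∈ A_r, the diamond product satisfies v z ⋄_s w = v ⋄_s (w z) = (v ⋄_s w) z, where z = x + y. -/
open FreeAlgebra

/-- Alphabet of `A_1 = ℚ⟨x,y⟩`. -/
inductive LetA : Type | x : LetA | y : LetA

/-- Alphabet of `A_r = ℚ⟨x, y_s : s ∈ μ_r⟩`; the group `G` plays the role of `μ_r`. -/
inductive LetR (G : Type) : Type | x : LetR G | y : G → LetR G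

/-- `A_1 = ℚ⟨x, y⟩`. -/
abbrev A1 : Type := FreeAlgebra ℚ LetA

/-- `A_r = ℚ⟨x, y_s : s ∈ μ_r⟩`. -/
abbrev Ar (G : Type) : Type := FreeAlgebra ℚ (LetR G)

noncomputable def X1 : A1 := ι ℚ LetA.x
noncomputable def Y1 : A1 := ι ℚ LetA.y

variable {G : Type} [CommGroup G]

noncomputable def Xr : Ar G := ι ℚ LetR.x
noncomputable def Yr (s : G) : Ar G := ι ℚ (LetR.y s)

/-- `z = x + y_1`. -/
noncomputable def zet : Ar G := Xr + Yr 1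

open scoped Classical in
/-- `z_s^δ = x + δ(s) y_s` with `δ(1) = 0`, `δ(s) = 1` otherwise. -/
noncomputable def zdel (s : G) : Ar G := if s = 1 then Xr else Xr + Yr s

/-- The involutive automorphism `φ` of `A_r`: `φ(x) = z`, `φ(y_s) = z_s^δ - z`. -/
noncomputable def phi : Ar G →ₐ[ℚ] Ar G :=
  lift ℚ (fun l => match l with
    | LetR.x => zet
    | LetR.y s => zdel s - zet)

/-- The natural embedding `A_1 → A_r`, `x ↦ x`, `y ↦ y_1`. -/
noncomputable def jm : A1 →ₐ[ℚ] Ar G :=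
  lift ℚ (fun l => match l with
    | LetA.x => Xr
    | LetA.y => Yr 1)

open scoped Classical in
/-- The anti-automorphism `τ` of `A_r`: `τ(x) = y_1`, `τ(y_1) = x`, `τ(y_s) = -y_s` (`s ≠ 1`). -/
noncomputable def tauR : Ar G →ₗ[ℚ] Ar G :=
  (MulOpposite.opLinearEquiv ℚ).symm.toLinearMap ∘ₗ
    (lift ℚ (fun l => match l with
      | LetR.x => MulOpposite.op (Yr 1)
      | LetR.y s => MulOpposite.op (if s = 1 then Xr else -(Yr s)) ) :
        Ar G →ₐ[ℚ] (Ar G)ᵐᵒᵖ).toLinearMap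

/-- The anti-automorphism `τ` of `A_1`: `τ(x) = y`, `τ(y) = x`. -/
noncomputable def tau1 : A1 →ₗ[ℚ] A1 :=
  (MulOpposite.opLinearEquiv ℚ).symm.toLinearMap ∘ₗ
    (lift ℚ (fun l => match l with
      | LetA.x => MulOpposite.op Y1
      | LetA.y => MulOpposite.op X1) : A1 →ₐ[ℚ] A1ᵐᵒᵖ).toLinearMap

/-- `wordP [(a₁,s₁),...,(a_l,s_l)] = x^{a₁} y_{s₁} ⋯ x^{a_l} y_{s_l}`,
i.e. the word `z_{a₁+1, s₁} ⋯ z_{a_l+1, s_l}`. -/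
noncomputable def wordP (L : List (ℕ × G)) : Ar G :=
  (L.map (fun p => Xr ^ p.1 * Yr p.2)).prod

/-- Cumulative-product reindexing of subscripts: this realizes the composition `I ∘ M_s`
on subscript lists, sending `(s₁, s₂, …, s_l)` to `(s s₁, s s₁ s₂, …, s s₁ ⋯ s_l)`. -/
def cumul : G → List (ℕ × G) → List (ℕ × G)
  | _, [] => []
  | g, p :: L => (p.1, g * p.2) :: cumul (g * p.2) L

/-- All the data entering the definition of the diamond products `⋄_s`:
the harmonic product `*`, the maps `ψ_s = φ ∘ I ∘ M_s`, and the family of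
`ℚ`-bilinear diamond products `D s : A_1 × A_r → A_r` (together with the
corestriction `D1` of `⋄_1` to `A_1 × A_1 → A_1`), each characterized by its
defining recursive rules. -/
structure DiamondSetup (G : Type) [CommGroup G] where
  /-- the harmonic product -/
  hst : Ar G →ₗ[ℚ] Ar G →ₗ[ℚ] Ar G
  one_hst : ∀ w, hst 1 w = w
  hst_one : ∀ v, hst v 1 = v
  hst_xr : ∀ v w, hst (v * Xr) w = hst v w * Xr
  hst_xl : ∀ v w, hst v (w * Xr) = hst v w * Xr
  hst_yy : ∀ (v w : Ar G) (s t : G), hst (v * Yr s) (w * Yr t) =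
      hst v (w * Yr t) * Yr s + hst (v * Yr s) w * Yr t + hst v w * (Xr * Yr (s * t))
  /-- the linear automorphisms `ψ_s = φ ∘ I ∘ M_s` -/
  psi : G → (Ar G ≃ₗ[ℚ] Ar G)
  psi_spec : ∀ (s : G) (L : List (ℕ × G)) (a : ℕ),
      psi s (wordP L * Xr ^ a) = phi (wordP (cumul s L) * Xr ^ a)
  /-- the diamond products `⋄_s : A_1 × A_r → A_r` -/
  D : G → A1 →ₗ[ℚ] Ar G →ₗ[ℚ] Ar G
  one_D : ∀ (s : G) (w : Ar G), D s 1 w = w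
  D_one : ∀ (s : G) (v : A1), D s v 1 = psi s (phi (jm v))
  Dxx : ∀ (s : G) (v : A1) (w : Ar G), D s (v * X1) (w * Xr) =
      D s v (w * Xr) * Xr - D s (v * Y1) w * Xr
  Dyx : ∀ (s : G) (v : A1) (w : Ar G), D s (v * Y1) (w * Xr) =
      D s v (w * Xr) * Yr 1 + D s (v * Y1) w * Xr
  Dxy : ∀ (s : G) (v : A1) (w : Ar G), D s (v * X1) (w * Yr 1) =
      D s v (w * Yr 1) * Xr + D s (v * X1) w * Yr 1
  Dyy : ∀ (s : G) (v : A1) (w : Ar G), D s (v * Y1) (w * Yr 1) =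
      D s v (w * Yr 1) * Yr 1 - D s (v * X1) w * Yr 1
  Dxyt : ∀ (s t : G), t ≠ 1 → ∀ (v : A1) (w : Ar G), D s (v * X1) (w * Yr t) =
      D s v (w * Yr t) * Xr + D s v (w * (Xr + Yr t)) * Yr t - D s (v * Y1) w * Yr t
  Dyyt : ∀ (s t : G), t ≠ 1 → ∀ (v : A1) (w : Ar G), D s (v * Y1) (w * Yr t) =
      D s v (w * Yr t) * Yr 1 - D s v (w * (Xr + Yr t)) * Yr t + D s (v * Y1) w * Yr t
  /-- `⋄_1` as a product `A_1 × A_1 → A_1` -/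
  D1 : A1 →ₗ[ℚ] A1 →ₗ[ℚ] A1
  D1_spec : ∀ u v : A1, jm (D1 u v) = D 1 u (jm v)

/-!
Both identities are linear in the factor multiplied by `z`, and a submodule of a free algebra
containing `1` and stable under right multiplication by letters is everything, so it suffices
to treat `1` and right multiples of letters. Appending `x` to a word does not touch the
subscripts reindexed by `I ∘ M_s`, hence `ψ_s(u x) = ψ_s(u) z` as `φ(x) = z`; with `φ(z) = x`
this is `v z ⋄_s 1 = (v ⋄_s 1) z`. For `w` ending in a letter the recursions for `vx` and `vy`
add up to `(v ⋄_s w) z`. Adding instead the recursions for `wx` and `wy` reduces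
`v ⋄_s (w z) = (v ⋄_s w) z` for `vx` and `vy` to the same identity for `v` and the first one.
-/

namespace FreeAlgebra

variable {R X : Type*} [CommSemiring R]

theorem submodule_eq_top_of_mul_ι_mem (S : Submodule R (FreeAlgebra R X)) (one_mem : 1 ∈ S)
    (mul_ι_mem : ∀ a ∈ S, ∀ x, a * ι R x ∈ S) : S = ⊤ := by
  have closed : ∀ b a, a ∈ S → a * b ∈ S := by
    intro b
    induction b using FreeAlgebra.induction with
    | grade0 r =>
      intro a ha
      rw [← Algebra.commutes, ← Algebra.smul_def]
      exact S.smul_mem r ha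
    | grade1 x => exact fun a ha => mul_ι_mem a ha x
    | mul b c hb hc => exact fun a ha => mul_assoc a b c ▸ hc _ (hb a ha)
    | add b c hb hc => exact fun a ha => mul_add a b c ▸ S.add_mem (hb a ha) (hc a ha)
  exact eq_top_iff.mpr fun b _ => one_mul b ▸ closed b 1 one_mem

end FreeAlgebra

variable {G : Type}

lemma span_wordP_mul_Xr_pow :
    Submodule.span ℚ (Set.range fun p : List (ℕ × G) × ℕ => wordP p.1 * Xr ^ p.2) = ⊤ := by
  refine FreeAlgebra.submodule_eq_top_of_mul_ι_mem _
    (Submodule.subset_span ⟨([], 0), by simp [wordP]⟩) fun a ha l => ?_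
  suffices h : _ ≤ (Submodule.span ℚ _).comap (LinearMap.mulRight ℚ (ι ℚ l)) from h ha
  refine Submodule.span_le.mpr ?_
  rintro _ ⟨⟨L, n⟩, rfl⟩
  apply Submodule.subset_span
  cases l with
  | x => exact ⟨(L, n + 1), by simp [pow_succ, mul_assoc, Xr]⟩
  | y t => exact ⟨(L ++ [(n, t)], 0), by simp [wordP, Yr, mul_assoc]⟩

variable [CommGroup G]

@[simp] lemma phi_Xr : phi (Xr : Ar G) = zet := by
  simp [phi, Xr]

@[simp] lemma phi_Yr (t : G) : phi (Yr t : Ar G) = zdel t - zet := by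
  simp [phi, Yr]

lemma phi_zet : phi (zet : Ar G) = Xr := by
  simp [zet, zdel]

lemma jm_X1_add_Y1 : (jm (X1 + Y1) : Ar G) = zet := by
  simp [jm, X1, Y1, zet]

namespace DiamondSetup

variable (S : DiamondSetup G) (s : G)

lemma psi_mul_Xr (u : Ar G) : S.psi s (u * Xr) = S.psi s u * zet := by
  suffices h : (S.psi s).toLinearMap ∘ₗ LinearMap.mulRight ℚ Xr =
      LinearMap.mulRight ℚ zet ∘ₗ (S.psi s).toLinearMap from LinearMap.congr_fun h u
  refine LinearMap.ext_on_range span_wordP_mul_Xr_pow fun ⟨L, a⟩ => ?_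
  simp only [LinearMap.coe_comp, Function.comp_apply, LinearMap.mulRight_apply,
    LinearEquiv.coe_coe]
  rw [mul_assoc, ← pow_succ, S.psi_spec, S.psi_spec, pow_succ, ← mul_assoc, map_mul, phi_Xr]

lemma D_mul_z_left (v : A1) (w : Ar G) : S.D s (v * (X1 + Y1)) w = S.D s v w * zet := by
  suffices h : S.D s (v * (X1 + Y1)) = LinearMap.mulRight ℚ zet ∘ₗ S.D s v from
    LinearMap.congr_fun h w
  refine LinearMap.eqLocus_eq_top.mp <|
    FreeAlgebra.submodule_eq_top_of_mul_ι_mem _ ?_ fun a _ l => ?_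
  · simp only [LinearMap.mem_eqLocus, LinearMap.coe_comp, Function.comp_apply,
      LinearMap.mulRight_apply, S.D_one, map_mul, jm_X1_add_Y1, phi_zet, psi_mul_Xr]
  simp only [LinearMap.mem_eqLocus, LinearMap.coe_comp, Function.comp_apply,
    LinearMap.mulRight_apply, zet, mul_add, map_add, LinearMap.add_apply]
  cases l with
  | x =>
    rw [← Xr, S.Dxx, S.Dyx]
    abel
  | y t =>
    rw [← Yr]
    rcases eq_or_ne t 1 with rfl | ht
    · rw [S.Dxy, S.Dyy]
      abel
    · rw [S.Dxyt s t ht, S.Dyyt s t ht]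
      abel

lemma D_mul_z_right (v : A1) (w : Ar G) : S.D s v (w * zet) = S.D s v w * zet := by
  suffices h : (S.D s).compl₂ (LinearMap.mulRight ℚ zet) =
      (S.D s).compr₂ (LinearMap.mulRight ℚ zet) from
    LinearMap.congr_fun (LinearMap.congr_fun h v) w
  refine LinearMap.eqLocus_eq_top.mp <|
    FreeAlgebra.submodule_eq_top_of_mul_ι_mem _ ?_ fun a ha l => ?_
  · ext w
    simp [S.one_D]
  rw [LinearMap.mem_eqLocus] at ha ⊢
  ext w
  have ha_w : S.D s a (w * zet) = S.D s a w * zet := LinearMap.congr_fun ha w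
  have split := S.D_mul_z_left s a w
  simp only [LinearMap.compl₂_apply, LinearMap.compr₂_apply, LinearMap.mulRight_apply]
  simp only [zet, mul_add, map_add, LinearMap.add_apply] at split ha_w ⊢
  cases l with
  | x =>
    rw [← X1, S.Dxx, S.Dxy]
    linear_combination (norm := noncomm_ring) (ha_w - split) * Xr
  | y =>
    rw [← Y1, S.Dyx, S.Dyy]
    linear_combination (norm := noncomm_ring) (ha_w - split) * Yr 1

end DiamondSetup

/-- For every `s ∈ μ_r`, `v ∈ A_1`, `w ∈ A_r`:
`v z ⋄_s w = v ⋄_s (w z) = (v ⋄_s w) z`, where `z = x + y`. -/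
theorem statement2 {G : Type} [CommGroup G] (S : DiamondSetup G)
    (s : G) (v : A1) (w : Ar G) :
    S.D s (v * (X1 + Y1)) w = S.D s v (w * zet) ∧
      S.D s v (w * zet) = S.D s v w * zet := by
  have right := S.D_mul_z_right s v w
  exact ⟨(S.D_mul_z_left s v w).trans right.symm, right⟩
end

section
/- For every s ∈ μ_r and v, v' ∈ A_1: (v v') ⋄_s 1 = (v ⋄_s 1)(v' ⋄_s 1), i.e., the map v ↦ v ⋄_s 1 is multiplicative on A_1. -/
open FreeAlgebra

variable {G : Type} [CommGroup G]

/-!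
By `D_one`, `v ⋄_s 1 = ψ_s (φ v)`. The involution `φ` maps `A_1` into itself (`x ↦ x + y`,
`y ↦ -y`), and on `A_1` the map `ψ_s = φ ∘ I ∘ M_s` is just `φ` after relabelling every `y_1` as
`y_s`: the cumulative products `s · 1 ⋯ 1` of a subscript sequence of `1`s are all `s`. Hence
`v ↦ v ⋄_s 1` is the composite of three algebra homomorphisms.
-/

noncomputable def embedAt (g : G) : A1 →ₐ[ℚ] Ar G :=
  lift ℚ (fun l => match l with
    | LetA.x => Xr
    | LetA.y => Yr g)

/-- The restriction of `phi` to `A_1`: since `z_1^δ = x`, it sends `y` to `-y`. -/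
noncomputable def phi1 : A1 →ₐ[ℚ] A1 :=
  lift ℚ (fun l => match l with
    | LetA.x => X1 + Y1
    | LetA.y => -Y1)

theorem jm_eq_embedAt_one : (jm : A1 →ₐ[ℚ] Ar G) = embedAt 1 := by
  ext l
  cases l <;> rfl

theorem phi_jm (v : A1) : (phi (jm v) : Ar G) = jm (phi1 v) := by
  rw [← AlgHom.comp_apply, ← AlgHom.comp_apply]
  congr 1
  ext l
  cases l <;> simp [phi, jm, phi1, zet, zdel, X1, Y1, Xr, Yr]

theorem cumul_map_one (g : G) (L : List ℕ) :
    cumul g (L.map fun n => (n, (1 : G))) = L.map fun n => (n, g) := by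
  induction L with
  | nil => rfl
  | cons n L ih => simp [cumul, ih]

/-- The word `x^{a₁} y_g ⋯ x^{a_l} y_g x^a` for `L = [a₁, …, a_l]`. -/
noncomputable def wordAt (L : List ℕ) (a : ℕ) (g : G) : Ar G :=
  wordP (L.map fun n => (n, g)) * Xr ^ a

theorem wordAt_mul_Xr {α : Type} (L : List ℕ) (a : ℕ) (g : α) :
    wordAt L a g * Xr = wordAt L (a + 1) g := by
  rw [wordAt, wordAt, mul_assoc, pow_succ]

theorem wordAt_mul_Yr {α : Type} (L : List ℕ) (a : ℕ) (g : α) :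
    wordAt L a g * Yr g = wordAt (L ++ [a]) 0 g := by
  simp [wordAt, wordP, mul_assoc]

theorem wordAt_nil_zero {α : Type} (g : α) : wordAt [] 0 g = 1 := by
  simp [wordAt, wordP]

/-- The prefix word makes this property stable under left multiplication, so that it can be
proved by induction on `w`. -/
def DiamondSetup.PsiRelabels (S : DiamondSetup G) (s : G) (w : A1) : Prop :=
  ∀ (L : List ℕ) (a : ℕ),
    S.psi s (wordAt L a 1 * embedAt 1 w) = phi (wordAt L a s * embedAt s w)

namespace DiamondSetup

variable (S : DiamondSetup G) (s : G)

theorem psi_wordAt_one (L : List ℕ) (a : ℕ) :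
    S.psi s (wordAt L a 1) = phi (wordAt L a s) := by
  rw [wordAt, S.psi_spec, cumul_map_one, wordAt]

theorem psiRelabels_one : S.PsiRelabels s 1 := by
  simpa [PsiRelabels] using S.psi_wordAt_one s

variable {S s} in
theorem PsiRelabels.mul_left {u : A1} (hu : S.PsiRelabels s u) (w : A1) :
    S.PsiRelabels s (w * u) := by
  induction w using FreeAlgebra.induction generalizing u with
  | grade0 r =>
    intro L a
    simp only [map_mul, Algebra.algebraMap_eq_smul_one, smul_one_mul, mul_smul_comm, map_smul,
      hu L a]
  | grade1 l =>
    intro L a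
    cases l with
    | x => simpa [embedAt, ← mul_assoc, wordAt_mul_Xr] using hu L (a + 1)
    | y => simpa [embedAt, ← mul_assoc, wordAt_mul_Yr] using hu (L ++ [a]) 0
  | mul w₁ w₂ h₁ h₂ => simpa only [mul_assoc] using h₁ (h₂ hu)
  | add w₁ w₂ h₁ h₂ =>
    intro L a
    simp only [add_mul, map_add, mul_add, h₁ hu L a, h₂ hu L a]

theorem psi_jm (w : A1) : S.psi s (jm w) = phi (embedAt s w) := by
  simpa [jm_eq_embedAt_one, wordAt_nil_zero] using (S.psiRelabels_one s).mul_left w [] 0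

theorem D_one_eq (v : A1) : S.D s v 1 = phi (embedAt s (phi1 v)) := by
  rw [S.D_one, phi_jm, S.psi_jm]

end DiamondSetup

/-- For every `s ∈ μ_r` and `v, v' ∈ A_1`: `(v v') ⋄_s 1 = (v ⋄_s 1)(v' ⋄_s 1)`,
i.e. the map `v ↦ v ⋄_s 1` is multiplicative on `A_1`. -/
theorem statement9 {G : Type} [CommGroup G] (S : DiamondSetup G)
    (s : G) (v v' : A1) :
    S.D s (v * v') 1 = S.D s v 1 * S.D s v' 1 := by
  simp only [S.D_one_eq, map_mul]
end
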